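/- arXiv:1512.04312 — 3 statements merged into one kernel-verified Lean document; each statement's English description precedes it below -/
import Mathlib

section
/- For all ε ≠ 0 in ℂ, the quintic-free identity holds: (1/(3ε))(x₀+εx₂)³ + 6(x₁+εx₃)³ - 3(x₀+x₁+εx₄)³ + 3(x₀+2x₁)³ - (x₀+3x₁)³ = x₀²x₂ + 6x₁²x₃ - 3(x₀+x₁)²x₄ + ε·R(ε) for some polynomial remainder R, so that as ε → 0 this family of rank-5 sums of cubes converges coefficient-wise to T = x₀²x₂ + 6x₁²x₃ - 3(x₀+x₁)²x₄. -/
open Filter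

/-- The family T_ε = (1/(3ε))((x₀+εx₂)³ + 6(x₁+εx₃)³ - 3(x₀+x₁+εx₄)³ + 3(x₀+2x₁)³
- (x₀+3x₁)³) of rank-5 sums of scalar multiples of cubes of linear forms satisfies
T_ε = T + ε·R(ε) for a polynomial remainder R, where T = x₀²x₂ + 6x₁²x₃ - 3(x₀+x₁)²x₄,
and hence T_ε converges to T as ε → 0. -/
theorem border_rank_five_family :
    ∃ R : ℂ → ℂ → ℂ → ℂ → ℂ → ℂ → ℂ,
      (∀ ε : ℂ, ε ≠ 0 → ∀ x₀ x₁ x₂ x₃ x₄ : ℂ,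
        (1 / (3 * ε)) * ((x₀ + ε * x₂) ^ 3 + 6 * (x₁ + ε * x₃) ^ 3
            - 3 * (x₀ + x₁ + ε * x₄) ^ 3 + 3 * (x₀ + 2 * x₁) ^ 3 - (x₀ + 3 * x₁) ^ 3)
          = (x₀ ^ 2 * x₂ + 6 * x₁ ^ 2 * x₃ - 3 * (x₀ + x₁) ^ 2 * x₄)
            + ε * R ε x₀ x₁ x₂ x₃ x₄) ∧
      (∀ x₀ x₁ x₂ x₃ x₄ : ℂ,
        Tendsto (fun ε : ℂ =>
            (1 / (3 * ε)) * ((x₀ + ε * x₂) ^ 3 + 6 * (x₁ + ε * x₃) ^ 3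
              - 3 * (x₀ + x₁ + ε * x₄) ^ 3 + 3 * (x₀ + 2 * x₁) ^ 3 - (x₀ + 3 * x₁) ^ 3))
          (nhdsWithin 0 {0}ᶜ)
          (nhds (x₀ ^ 2 * x₂ + 6 * x₁ ^ 2 * x₃ - 3 * (x₀ + x₁) ^ 2 * x₄))) := by
  refine ⟨fun ε x₀ x₁ x₂ x₃ x₄ =>
      x₀ * x₂ ^ 2 + 6 * x₁ * x₃ ^ 2 - 3 * (x₀ + x₁) * x₄ ^ 2
        + (ε / 3) * (x₂ ^ 3 + 6 * x₃ ^ 3 - 3 * x₄ ^ 3), ?_, ?_⟩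
  · intro ε hε x₀ x₁ x₂ x₃ x₄
    field_simp
    ring
  · intro x₀ x₁ x₂ x₃ x₄
    have key : ∀ ε : ℂ, ε ≠ 0 →
        (1 / (3 * ε)) * ((x₀ + ε * x₂) ^ 3 + 6 * (x₁ + ε * x₃) ^ 3
            - 3 * (x₀ + x₁ + ε * x₄) ^ 3 + 3 * (x₀ + 2 * x₁) ^ 3 - (x₀ + 3 * x₁) ^ 3)
          = (x₀ ^ 2 * x₂ + 6 * x₁ ^ 2 * x₃ - 3 * (x₀ + x₁) ^ 2 * x₄)
            + ε * (x₀ * x₂ ^ 2 + 6 * x₁ * x₃ ^ 2 - 3 * (x₀ + x₁) * x₄ ^ 2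
              + (ε / 3) * (x₂ ^ 3 + 6 * x₃ ^ 3 - 3 * x₄ ^ 3)) := by
      intro ε hε; field_simp; ring
    have hcont : Tendsto (fun ε : ℂ =>
        (x₀ ^ 2 * x₂ + 6 * x₁ ^ 2 * x₃ - 3 * (x₀ + x₁) ^ 2 * x₄)
          + ε * (x₀ * x₂ ^ 2 + 6 * x₁ * x₃ ^ 2 - 3 * (x₀ + x₁) * x₄ ^ 2
            + (ε / 3) * (x₂ ^ 3 + 6 * x₃ ^ 3 - 3 * x₄ ^ 3)))
        (nhdsWithin 0 {0}ᶜ)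
        (nhds (x₀ ^ 2 * x₂ + 6 * x₁ ^ 2 * x₃ - 3 * (x₀ + x₁) ^ 2 * x₄)) := by
      have : Continuous (fun ε : ℂ =>
          (x₀ ^ 2 * x₂ + 6 * x₁ ^ 2 * x₃ - 3 * (x₀ + x₁) ^ 2 * x₄)
            + ε * (x₀ * x₂ ^ 2 + 6 * x₁ * x₃ ^ 2 - 3 * (x₀ + x₁) * x₄ ^ 2
              + (ε / 3) * (x₂ ^ 3 + 6 * x₃ ^ 3 - 3 * x₄ ^ 3))) := by continuity
      have h0 := (this.tendsto 0).mono_left (nhdsWithin_le_nhds (s := {0}ᶜ))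
      simpa using h0
    refine hcont.congr' ?_
    filter_upwards [self_mem_nhdsWithin] with ε hε
    exact (key ε hε).symm
end

section
/- The real rank of the complex multiplication tensor is exactly 3: it cannot be computed with 2 real bilinear multiplications. Precisely, there do not exist real numbers x₁₁,x₁₂,x₂₁,x₂₂ and real linear forms L₁,L₂ in (a,b) and M₁,M₂ in (c,d) such that ac-bd = x₁₁·L₁(a,b)M₁(c,d) + x₁₂·L₂(a,b)M₂(c,d) and ad+bc = x₂₁·L₁(a,b)M₁(c,d) + x₂₂·L₂(a,b)M₂(c,d) as identities of polynomials in ℝ[a,b,c,d]. -/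
/-- The real rank of the complex multiplication tensor is greater than 2: there is no
way to compute (ac-bd, ad+bc) using only 2 real bilinear multiplications of real linear
forms in (a,b) and (c,d). -/
theorem complex_mult_real_rank_gt_two :
    ¬ ∃ (x₁₁ x₁₂ x₂₁ x₂₂ p₁ q₁ p₂ q₂ r₁ s₁ r₂ s₂ : ℝ),
      ∀ a b c d : ℝ,
        a * c - b * d
          = x₁₁ * ((p₁ * a + q₁ * b) * (r₁ * c + s₁ * d))
            + x₁₂ * ((p₂ * a + q₂ * b) * (r₂ * c + s₂ * d)) ∧
        a * d + b * c
          = x₂₁ * ((p₁ * a + q₁ * b) * (r₁ * c + s₁ * d))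
            + x₂₂ * ((p₂ * a + q₂ * b) * (r₂ * c + s₂ * d)) := by
  rintro ⟨x₁₁, x₁₂, x₂₁, x₂₂, p₁, q₁, p₂, q₂, r₁, s₁, r₂, s₂, h⟩
  have e1 := (h 1 0 1 0).1
  have e2 := (h 1 0 0 1).1
  have e3 := (h 0 1 1 0).1
  have e4 := (h 0 1 0 1).1
  have e5 := (h 1 0 1 0).2
  have e6 := (h 1 0 0 1).2
  have e7 := (h 0 1 1 0).2
  have e8 := (h 0 1 0 1).2
  simp only [mul_one, mul_zero, one_mul, zero_mul, add_zero, zero_add, sub_zero, zero_sub] at *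
  set l : ℝ := x₂₁ * x₁₂ - x₁₁ * x₂₂ with hl
  have m11 : x₂₁ = l * (p₂ * r₂) := by rw [hl]; linear_combination x₂₁ * e1 - x₁₁ * e5
  have m12 : x₁₁ = -(l * (p₂ * s₂)) := by rw [hl]; linear_combination -(x₂₁ * e2) + x₁₁ * e6
  have m21 : x₁₁ = -(l * (q₂ * r₂)) := by rw [hl]; linear_combination -(x₂₁ * e3) + x₁₁ * e7
  have m22 : x₂₁ = -(l * (q₂ * s₂)) := by rw [hl]; linear_combination -(x₂₁ * e4) + x₁₁ * e8
  have key : x₁₁ ^ 2 + x₂₁ ^ 2 = 0 := by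
    linear_combination x₂₁ * m11 + (l * (p₂ * r₂)) * m22 + x₁₁ * m12 - (l * (p₂ * s₂)) * m21
  have h11 : x₁₁ = 0 := by nlinarith [sq_nonneg x₁₁, sq_nonneg x₂₁]
  have h21 : x₂₁ = 0 := by nlinarith [sq_nonneg x₁₁, sq_nonneg x₂₁]
  rw [h11] at e1 e2 e3 e4
  nlinarith [e1, e2, e3, e4, mul_self_nonneg (x₁₂ * p₂ * r₂)]
end

section
/- The Coppersmith–Winograd tensor T = a₁⊗b₂⊗c₂ + a₂⊗b₁⊗c₂ + a₂⊗b₂⊗c₁ + a₁⊗b₃⊗c₃ + a₃⊗b₁⊗c₃ + a₃⊗b₃⊗c₁ in ℂ³⊗ℂ³⊗ℂ³ has tensor rank at most 4, i.e., it can be written as a sum of 4 simple tensors u⊗v⊗w. -/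
/-- The Coppersmith–Winograd tensor
a₁⊗b₂⊗c₂ + a₂⊗b₁⊗c₂ + a₂⊗b₂⊗c₁ + a₁⊗b₃⊗c₃ + a₃⊗b₁⊗c₃ + a₃⊗b₃⊗c₁ in ℂ³⊗ℂ³⊗ℂ³,
given by its coordinates in the standard bases. -/
def CWtensor : Fin 3 → Fin 3 → Fin 3 → ℂ := fun i j k =>
  (if i = 0 ∧ j = 1 ∧ k = 1 then 1 else 0) +
  (if i = 1 ∧ j = 0 ∧ k = 1 then 1 else 0) +
  (if i = 1 ∧ j = 1 ∧ k = 0 then 1 else 0) +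
  (if i = 0 ∧ j = 2 ∧ k = 2 then 1 else 0) +
  (if i = 2 ∧ j = 0 ∧ k = 2 then 1 else 0) +
  (if i = 2 ∧ j = 2 ∧ k = 0 then 1 else 0)

/-- The Coppersmith–Winograd tensor has tensor rank at most 4: it is a sum of 4 simple
tensors u⊗v⊗w. -/
theorem CW_tensor_rank_le_four :
    ∃ u v w : Fin 4 → Fin 3 → ℂ,
      ∀ i j k : Fin 3, CWtensor i j k = ∑ r : Fin 4, u r i * v r j * w r k := by
  refine ⟨![![1,2,0],![1,0,2*Complex.I],![1,0,-2*Complex.I],![1,-2,0]],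
    ![![1,2,0],![1,0,2*Complex.I],![1,0,-2*Complex.I],![1,-2,0]],
    ![![1/8,2/8,0],![-1/8,0,-2/8*Complex.I],![-1/8,0,2/8*Complex.I],![1/8,-2/8,0]],
    ?_⟩
  intro i j k
  fin_cases i <;> fin_cases j <;> fin_cases k <;>
    simp [CWtensor, Fin.sum_univ_four, Complex.I_sq] <;> ring_nf <;>
    simp [Complex.I_sq] <;> ring
end
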